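/- Assume that a(t) > 0 for Lebesgue-almost every t ∈ [t₀, τ₀) and that the function t ↦ b(t)²/a(t) is locally integrable on [t₀, τ₀). Then every noncontinuable solution y of the Abel equation (1.1) on an interval [t₀, t₁) ⊆ [t₀, τ₀) satisfies t₁ = τ₀; in particular, for every γ ∈ ℝ there exists a solution y of (1.1) on all of [t₀, τ₀) with y(t₀) = γ. -/

import Mathlib

/-
Where `a > 0`, completing the square in `a y⁴ + b y³` gives
`2 y (-(a y³ + b y² + c y + d)) ≤ (b²/a + 2|c| + |d|) (y² + 1)`, so along a solution the derivative
of `log (y² + 1)` is bounded a.e. by a locally integrable function: a solution on `[t₀, t₁)` with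
`t₁ < τ₀` stays bounded. Its derivative is then bounded too, so `y` has a limit at `t₁`, and
Picard–Lindelöf started from that limit continues `y` past `t₁`. For the initial value problem,
Zorn's lemma extends a local solution through `γ` to a noncontinuable one, which therefore lives on
all of `[t₀, τ₀)`.
-/

open Set MeasureTheory intervalIntegral

/-- The right-hand side `-(a y³ + b y² + c y + d)` of the Abel equation (1.1). -/
noncomputable def abelRHS (a b c d y : ℝ → ℝ) (t : ℝ) : ℝ :=
  -(a t * y t ^ 3 + b t * y t ^ 2 + c t * y t + d t)

/-- `y` is a solution of the Abel equation `y' + a y³ + b y² + c y + d = 0` on the set `S`. -/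
def IsAbelSolOn (a b c d y : ℝ → ℝ) (S : Set ℝ) : Prop :=
  ∀ t ∈ S, HasDerivWithinAt y (abelRHS a b c d y t) S t

/-- The set of real points of the interval `[t₀, τ)`, `τ` an extended real. -/
def eIco (t₀ : ℝ) (τ : EReal) : Set ℝ := {t : ℝ | t₀ ≤ t ∧ (t : EReal) < τ}

/-- A solution `y` of the Abel equation on `[t₀, t₁) ⊆ [t₀, τ₀)` is noncontinuable if it
cannot be extended to the right as a solution on a larger subinterval of `[t₀, τ₀)`. -/
def Noncontinuable (a b c d : ℝ → ℝ) (t₀ : ℝ) (τ₀ t₁ : EReal) (y : ℝ → ℝ) : Prop :=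
  ¬ ∃ (t₂ : EReal) (z : ℝ → ℝ), t₁ < t₂ ∧ t₂ ≤ τ₀ ∧
      IsAbelSolOn a b c d z (eIco t₀ t₂) ∧ EqOn z y (eIco t₀ t₁)

open Filter Topology

lemma eIco_coe (t₀ m : ℝ) : eIco t₀ (m : EReal) = Ico t₀ m := by
  ext t; simp [eIco, EReal.coe_lt_coe_iff]

lemma Icc_subset_eIco {t₀ m : ℝ} {τ : EReal} (h : (m : EReal) < τ) : Icc t₀ m ⊆ eIco t₀ τ :=
  fun _ ht => ⟨ht.1, (EReal.coe_le_coe_iff.2 ht.2).trans_lt h⟩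

lemma eIco_mem_nhdsWithin_eIco {t₀ t : ℝ} {τ τ' : EReal} (h : (t : EReal) < τ') :
    eIco t₀ τ' ∈ 𝓝[eIco t₀ τ] t := by
  obtain ⟨ρ, htρ, hρ⟩ := EReal.exists_between_coe_real h
  exact mem_nhdsWithin.2 ⟨Iio ρ, isOpen_Iio, EReal.coe_lt_coe_iff.1 htρ,
    fun x hx => ⟨hx.2.1, (EReal.coe_lt_coe_iff.2 hx.1).trans hρ⟩⟩

theorem exists_tendsto_nhdsLT_of_abs_deriv_le {y y' : ℝ → ℝ} {t₀ r C : ℝ} (hr : t₀ < r)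
    (hy : ∀ t ∈ Ico t₀ r, HasDerivWithinAt y (y' t) (Ico t₀ r) t)
    (hC : ∀ t ∈ Ico t₀ r, |y' t| ≤ C) : ∃ L, Tendsto y (𝓝[<] r) (𝓝 L) := by
  have hlip : LipschitzOnWith C.toNNReal y (Ico t₀ r) :=
    (convex_Ico t₀ r).lipschitzOnWith_of_nnnorm_hasDerivWithin_le hy fun t ht => by
      rw [← NNReal.coe_le_coe, coe_nnnorm, Real.norm_eq_abs]
      exact (hC t ht).trans (Real.le_coe_toNNReal C)
  obtain ⟨g, hg, hgy⟩ := hlip.extend_real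
  exact ⟨g r, ((hg.continuous.tendsto r).mono_left nhdsWithin_le_nhds).congr'
    (eventuallyEq_of_mem (Ico_mem_nhdsLT hr) hgy).symm⟩

theorem log_sq_add_one_sub_le_integral {y y' G : ℝ → ℝ} {t₀ s : ℝ} (hs : t₀ ≤ s)
    (hy : ∀ t ∈ Icc t₀ s, HasDerivWithinAt y (y' t) (Icc t₀ s) t)
    (hy' : ContinuousOn y' (Icc t₀ s)) (hG : IntegrableOn G (Icc t₀ s))
    (hyG : ∀ᵐ t ∂volume.restrict (Icc t₀ s), 2 * y t * y' t ≤ G t * (y t ^ 2 + 1)) :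
    Real.log (y s ^ 2 + 1) - Real.log (y t₀ ^ 2 + 1) ≤ ∫ t in t₀..s, G t := by
  have hpos : ∀ t, 0 < y t ^ 2 + 1 := fun t => by positivity
  have hyc : ContinuousOn y (Icc t₀ s) := fun t ht => (hy t ht).continuousWithinAt
  have hu'c : ContinuousOn (fun t => 2 * y t * y' t / (y t ^ 2 + 1)) (Icc t₀ s) :=
    ((continuousOn_const.mul hyc).mul hy').div ((hyc.pow 2).add continuousOn_const)
      fun t _ => (hpos t).ne'
  have hderiv : ∀ t ∈ Ioo t₀ s, HasDerivWithinAt (fun t => Real.log (y t ^ 2 + 1))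
      (2 * y t * y' t / (y t ^ 2 + 1)) (Ioi t) t := fun t ht => by
    have h := (hy t (Ioo_subset_Icc_self ht)).hasDerivAt (Icc_mem_nhds ht.1 ht.2)
    have h2 : HasDerivAt (fun t => y t ^ 2 + 1) (2 * y t * y' t) t := by
      simpa [mul_assoc] using (h.fun_pow 2).add_const 1
    exact (h2.log (hpos t).ne').hasDerivWithinAt
  have hlogc : ContinuousOn (fun t => Real.log (y t ^ 2 + 1)) (Icc t₀ s) :=
    ((hyc.pow 2).add continuousOn_const).log fun t _ => (hpos t).ne'
  rw [← integral_eq_sub_of_hasDeriv_right_of_le hs hlogc hderiv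
    (hu'c.intervalIntegrable_of_Icc hs)]
  refine integral_mono_ae_restrict hs (hu'c.intervalIntegrable_of_Icc hs)
    ((intervalIntegrable_iff_integrableOn_Icc_of_le hs).2 hG) ?_
  filter_upwards [hyG] with t ht
  exact (div_le_iff₀ (hpos t)).2 ht

theorem exists_abs_le_of_two_mul_deriv_le {y y' G : ℝ → ℝ} {t₀ t₁ : ℝ}
    (hy : ∀ t ∈ Ico t₀ t₁, HasDerivWithinAt y (y' t) (Ico t₀ t₁) t)
    (hy' : ContinuousOn y' (Ico t₀ t₁)) (hG : IntegrableOn G (Icc t₀ t₁))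
    (hyG : ∀ᵐ t ∂volume.restrict (Ico t₀ t₁), 2 * y t * y' t ≤ G t * (y t ^ 2 + 1)) :
    ∃ R, ∀ t ∈ Ico t₀ t₁, |y t| ≤ R := by
  set B := Real.log (y t₀ ^ 2 + 1) + ∫ t in Icc t₀ t₁, |G t|
  refine ⟨Real.exp B, fun s hs => ?_⟩
  have hsub : Icc t₀ s ⊆ Ico t₀ t₁ := Icc_subset_Ico_right hs.2
  have hsub' : Icc t₀ s ⊆ Icc t₀ t₁ := Icc_subset_Icc_right hs.2.le
  have hlog := log_sq_add_one_sub_le_integral hs.1 (fun t ht => (hy t (hsub ht)).mono hsub)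
    (hy'.mono hsub) (hG.mono_set hsub') (ae_restrict_of_ae_restrict_of_subset hsub hyG)
  have habs : ∫ t in t₀..s, G t ≤ ∫ t in Icc t₀ t₁, |G t| := by
    rw [integral_of_le hs.1]
    calc ∫ t in Ioc t₀ s, G t ≤ ∫ t in Ioc t₀ s, |G t| :=
          integral_mono (hG.mono_set (Ioc_subset_Icc_self.trans hsub'))
            (hG.mono_set (Ioc_subset_Icc_self.trans hsub')).abs fun t => le_abs_self (G t)
      _ ≤ ∫ t in Icc t₀ t₁, |G t| :=
          setIntegral_mono_set hG.abs (Eventually.of_forall fun _ => abs_nonneg _)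
            (Ioc_subset_Icc_self.trans hsub').eventuallyLE
  have hexp : y s ^ 2 + 1 ≤ Real.exp B :=
    (Real.log_le_iff_le_exp (by positivity)).1 (by linarith)
  nlinarith [sq_abs (y s), sq_nonneg (|y s| - 1)]

section ODE

variable {E : Type*} [NormedAddCommGroup E] [NormedSpace ℝ E] {f : ℝ → E → E} {y z : ℝ → E}
  {S T : Set ℝ}

def IsSolutionOn (f : ℝ → E → E) (y : ℝ → E) (S : Set ℝ) : Prop :=
  ∀ t ∈ S, HasDerivWithinAt y (f t (y t)) S t

lemma IsSolutionOn.hasDerivWithinAt_of_eventuallyEq {t : ℝ} (hy : IsSolutionOn f y S)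
    (htS : t ∈ S) (htT : t ∈ T) (hS : S ∈ 𝓝[T] t) (hzy : z =ᶠ[𝓝[T] t] y) :
    HasDerivWithinAt z (f t (z t)) T t := by
  have hzt : z t = y t := hzy.eq_of_nhdsWithin htT
  rw [hzt]
  exact ((hy t htS).mono_of_mem_nhdsWithin hS).congr_of_eventuallyEq hzy hzt

lemma IsSolutionOn.mono (hy : IsSolutionOn f y S) (hTS : T ⊆ S) :
    IsSolutionOn f y T :=
  fun t ht => (hy t (hTS ht)).mono hTS

lemma IsSolutionOn.congr (hy : IsSolutionOn f y S) (hzy : EqOn z y S) : IsSolutionOn f z S :=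
  fun _ ht => hy.hasDerivWithinAt_of_eventuallyEq ht ht self_mem_nhdsWithin
    (eventuallyEq_of_mem self_mem_nhdsWithin hzy)

lemma IsSolutionOn.hasDerivWithinAt_Iic {t₀ r : ℝ} (hr : t₀ < r) (hy : IsSolutionOn f y (Ico t₀ r))
    (hyr : Tendsto y (𝓝[<] r) (𝓝 (y r)))
    (hf : Tendsto (fun t => f t (y t)) (𝓝[<] r) (𝓝 (f r (y r)))) :
    HasDerivWithinAt y (f r (y r)) (Iic r) r := by
  have hderiv : ∀ t ∈ Ioo t₀ r, HasDerivAt y (f t (y t)) t := fun t ht =>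
    (hy t (Ioo_subset_Ico_self ht)).hasDerivAt (Ico_mem_nhds ht.1 ht.2)
  have hIoo : Ioo t₀ r ∈ 𝓝[<] r := Ioo_mem_nhdsLT hr
  exact hasDerivWithinAt_Iic_of_tendsto_deriv
    (fun t ht => (hderiv t ht).differentiableAt.differentiableWithinAt)
    (hyr.mono_left (nhdsWithin_mono _ Ioo_subset_Iio_self)) hIoo
    (hf.congr' (eventuallyEq_of_mem hIoo fun t ht => (hderiv t ht).deriv.symm))

theorem IsSolutionOn.ite {t₀ r m : ℝ} {w : ℝ → E} (hr : t₀ < r)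
    (hy : IsSolutionOn f y (Ico t₀ r)) (hyr : Tendsto y (𝓝[<] r) (𝓝 (w r)))
    (hf : Tendsto (fun t => f t (y t)) (𝓝[<] r) (𝓝 (f r (w r))))
    (hw : IsSolutionOn f w (Icc r m)) :
    IsSolutionOn f (fun t => if t < r then y t else w t) (Ico t₀ m) := by
  set z := fun t => if t < r then y t else w t
  have hzy : EqOn z y (Iio r) := fun t ht => if_pos ht
  have hzw : EqOn z w (Ici r) := fun t ht => if_neg (not_lt.2 ht)
  intro t ht
  rcases lt_trichotomy t r with htr | rfl | htr
  · exact hy.hasDerivWithinAt_of_eventuallyEq ⟨ht.1, htr⟩ ht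
      (mem_nhdsWithin.2 ⟨Iio r, isOpen_Iio, htr, fun x hx => ⟨hx.2.1, hx.1⟩⟩)
      (eventuallyEq_of_mem (mem_nhdsWithin_of_mem_nhds (Iio_mem_nhds htr)) hzy)
  · have hev : z =ᶠ[𝓝[<] t] y := eventuallyEq_of_mem self_mem_nhdsWithin hzy
    have hzt : z t = w t := hzw (mem_Ici.2 le_rfl)
    have hleft : HasDerivWithinAt z (f t (z t)) (Iic t) t := by
      refine (hy.congr (hzy.mono Ico_subset_Iio_self)).hasDerivWithinAt_Iic hr ?_ ?_
      · rw [hzt]; exact hyr.congr' hev.symm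
      · have hfz : (fun x => f x (z x)) =ᶠ[𝓝[<] t] fun x => f x (y x) :=
          hev.mono fun x hx => by simp only [hx]
        rw [hzt]; exact hf.congr' hfz.symm
    have hright : HasDerivWithinAt z (f t (z t)) (Icc t m) t :=
      hw.hasDerivWithinAt_of_eventuallyEq (left_mem_Icc.2 ht.2.le) (left_mem_Icc.2 ht.2.le)
        self_mem_nhdsWithin (eventuallyEq_of_mem self_mem_nhdsWithin (hzw.mono Icc_subset_Ici_self))
    exact (hleft.union hright).mono fun x hx => (le_total x t).imp id fun h => ⟨h, hx.2.le⟩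
  · exact hw.hasDerivWithinAt_of_eventuallyEq ⟨htr.le, ht.2.le⟩ ht
      (mem_nhdsWithin.2 ⟨Ioi r, isOpen_Ioi, htr, fun x hx => ⟨hx.1.le, hx.2.2.le⟩⟩)
      (eventuallyEq_of_mem (mem_nhdsWithin_of_mem_nhds (Ioi_mem_nhds htr))
        (hzw.mono Ioi_subset_Ici_self))

theorem exists_isSolutionOn_eIco_iSup {ι : Type*} {t₀ : ℝ} {T : ι → EReal} {Y : ι → ℝ → E}
    (hY : ∀ i, IsSolutionOn f (Y i) (eIco t₀ (T i)))
    (hcompat : ∀ i j, ∀ t ∈ eIco t₀ (T i) ∩ eIco t₀ (T j), Y i t = Y j t) :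
    ∃ Z : ℝ → E, IsSolutionOn f Z (eIco t₀ (⨆ i, T i)) ∧ ∀ i, EqOn Z (Y i) (eIco t₀ (T i)) := by
  classical
  let Z : ℝ → E := fun t => if h : ∃ i, t ∈ eIco t₀ (T i) then Y h.choose t else 0
  have hZ : ∀ i, EqOn Z (Y i) (eIco t₀ (T i)) := fun i t ht => by
    have h : ∃ i, t ∈ eIco t₀ (T i) := ⟨i, ht⟩
    simp only [Z, dif_pos h]
    exact hcompat _ _ t ⟨h.choose_spec, ht⟩
  refine ⟨Z, fun t ht => ?_, hZ⟩
  obtain ⟨i, hi⟩ := lt_iSup_iff.1 ht.2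
  exact ((hY i).congr (hZ i)).hasDerivWithinAt_of_eventuallyEq ⟨ht.1, hi⟩ ht
    (eIco_mem_nhdsWithin_eIco hi) EventuallyEq.rfl

theorem IsSolutionOn.exists_maximal_extension {t₀ : ℝ} {t₁ τ₀ : EReal} (h₁ : t₁ ≤ τ₀)
    (hy : IsSolutionOn f y (eIco t₀ t₁)) :
    ∃ (t₂ : EReal) (z : ℝ → E), t₁ ≤ t₂ ∧ t₂ ≤ τ₀ ∧ IsSolutionOn f z (eIco t₀ t₂) ∧
      EqOn z y (eIco t₀ t₁) ∧ ¬ ∃ (t₃ : EReal) (w : ℝ → E), t₂ < t₃ ∧ t₃ ≤ τ₀ ∧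
        IsSolutionOn f w (eIco t₀ t₃) ∧ EqOn w z (eIco t₀ t₂) := by
  -- Zorn's lemma for the extensions of `y`, preordered by extension; a nonempty chain is bounded
  -- by the solution glued together on the union of its intervals.
  let P := {p : EReal × (ℝ → E) //
    t₁ ≤ p.1 ∧ p.1 ≤ τ₀ ∧ IsSolutionOn f p.2 (eIco t₀ p.1) ∧ EqOn p.2 y (eIco t₀ t₁)}
  let R : P → P → Prop := fun p q => p.1.1 ≤ q.1.1 ∧ EqOn q.1.2 p.1.2 (eIco t₀ p.1.1)
  have : Nonempty P := ⟨⟨(t₁, y), le_rfl, h₁, hy, eqOn_refl _ _⟩⟩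
  have htrans : ∀ {p q s : P}, R p q → R q s → R p s := fun ⟨hpq, hqp⟩ ⟨hqs, hsq⟩ =>
    ⟨hpq.trans hqs, fun t ht => (hsq ⟨ht.1, ht.2.trans_le hpq⟩).trans (hqp ht)⟩
  have hchain : ∀ c : Set P, IsChain R c → c.Nonempty → ∃ ub, ∀ p ∈ c, R p ub := by
    intro c hc ⟨p₀, hp₀⟩
    obtain ⟨Z, hZ, hZc⟩ := exists_isSolutionOn_eIco_iSup (T := fun p : c => p.1.1.1)
      (fun p => p.1.2.2.2.1) fun p q t ht => by
        rcases eq_or_ne p q with rfl | hpq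
        · rfl
        rcases hc p.2 q.2 (Subtype.coe_ne_coe.2 hpq) with h | h
        exacts [(h.2 ht.1).symm, h.2 ht.2]
    have hle : ∀ p : c, p.1.1.1 ≤ ⨆ q : c, q.1.1.1 := le_iSup fun q : c => q.1.1.1
    have hZy : EqOn Z y (eIco t₀ t₁) := fun t ht =>
      (hZc ⟨p₀, hp₀⟩ ⟨ht.1, ht.2.trans_le p₀.2.1⟩).trans (p₀.2.2.2.2 ht)
    exact ⟨⟨(_, Z), p₀.2.1.trans (hle ⟨p₀, hp₀⟩), iSup_le fun p => p.1.2.2.1, hZ, hZy⟩,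
      fun p hp => ⟨hle ⟨p, hp⟩, hZc ⟨p, hp⟩⟩⟩
  obtain ⟨⟨⟨t₂, z⟩, h₁₂, h₂, hz, hzy⟩, hmax⟩ :=
    exists_maximal_of_nonempty_chains_bounded hchain htrans
  refine ⟨t₂, z, h₁₂, h₂, hz, hzy, fun ⟨t₃, w, h₂₃, h₃, hw, hwz⟩ => h₂₃.not_ge ?_⟩
  exact (hmax ⟨(t₃, w), h₁₂.trans h₂₃.le, h₃, hw, fun t ht => (hwz ⟨ht.1, ht.2.trans_le h₁₂⟩).trans
    (hzy ht)⟩ ⟨h₂₃.le, hwz⟩).1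

end ODE

section Abel

variable {a b c d : ℝ → ℝ}

/-- `IsAbelSolOn a b c d` is `IsSolutionOn (abelField a b c d)` and `Noncontinuable a b c d` is the
corresponding maximality by unfolding, so the general lemmas above apply to them verbatim. -/
def abelField (a b c d : ℝ → ℝ) (t x : ℝ) : ℝ := -(a t * x ^ 3 + b t * x ^ 2 + c t * x + d t)

lemma two_mul_mul_abelField_le {t : ℝ} (ha : 0 < a t) (x : ℝ) :
    2 * x * abelField a b c d t x ≤ (b t ^ 2 / a t + (2 * |c t| + |d t|)) * (x ^ 2 + 1) := by
  set e := b t ^ 2 / a t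
  have he : a t * e = b t ^ 2 := mul_div_cancel₀ _ ha.ne'
  -- `a (a x⁴ + 2 b x³ + e x²) = (a x² + b x)²` since `a e = b²`
  have hquartic : 0 ≤ a t * x ^ 4 + 2 * b t * x ^ 3 + e * x ^ 2 :=
    (mul_nonneg_iff_of_pos_left ha).1 <| by
      nlinarith [sq_nonneg (a t * x ^ 2 + b t * x)]
  have hc : -(c t * x ^ 2) ≤ |c t| * (x ^ 2 + 1) := by
    nlinarith [neg_abs_le (c t), sq_nonneg x, abs_nonneg (c t)]
  have hd : -(2 * (d t * x)) ≤ |d t| * (x ^ 2 + 1) := by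
    nlinarith [neg_abs_le (d t * x), abs_mul (d t) x, abs_nonneg (d t), sq_abs x,
      mul_nonneg (abs_nonneg (d t)) (sq_nonneg (|x| - 1))]
  have he0 : 0 ≤ e := div_nonneg (sq_nonneg _) ha.le
  simp only [abelField]
  nlinarith [mul_nonneg ha.le (pow_nonneg (sq_nonneg x) 2), mul_nonneg he0 (sq_nonneg x)]

lemma abs_abelField_le {t x K ρ : ℝ} (hK : |a t| + |b t| + |c t| + |d t| ≤ K) (hρ : 1 ≤ ρ)
    (hx : |x| ≤ ρ) : |abelField a b c d t x| ≤ K * ρ ^ 3 := by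
  have h0 : 1 ≤ ρ ^ 3 := one_le_pow₀ hρ
  have h1 : |x| ≤ ρ ^ 3 := hx.trans (le_self_pow₀ hρ (by norm_num))
  have h2 : |x| ^ 2 ≤ ρ ^ 3 :=
    (pow_le_pow_left₀ (abs_nonneg x) hx 2).trans (pow_le_pow_right₀ hρ (by norm_num))
  have h3 : |x| ^ 3 ≤ ρ ^ 3 := pow_le_pow_left₀ (abs_nonneg x) hx 3
  calc |abelField a b c d t x|
      ≤ |a t| * |x| ^ 3 + |b t| * |x| ^ 2 + |c t| * |x| + |d t| := by
        have := abs_add_three (a t * x ^ 3 + b t * x ^ 2) (c t * x) (d t)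
        have := abs_add_le (a t * x ^ 3) (b t * x ^ 2)
        simp only [abelField, abs_neg, abs_mul, abs_pow] at *
        linarith
    _ ≤ (|a t| + |b t| + |c t| + |d t|) * ρ ^ 3 := by
        nlinarith [abs_nonneg (a t), abs_nonneg (b t), abs_nonneg (c t), abs_nonneg (d t)]
    _ ≤ K * ρ ^ 3 := by gcongr

lemma lipschitzOnWith_abelField {t K ρ : ℝ} (hK : |a t| + |b t| + |c t| + |d t| ≤ K)
    (hρ : 1 ≤ ρ) :
    LipschitzOnWith (3 * K * ρ ^ 2).toNNReal (abelField a b c d t) (Metric.closedBall 0 ρ) := by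
  refine LipschitzOnWith.of_dist_le_mul fun x hx x' hx' => ?_
  rw [mem_closedBall_zero_iff, Real.norm_eq_abs] at hx hx'
  have hK0 : 0 ≤ K := (by positivity : (0 : ℝ) ≤ |a t| + |b t| + |c t| + |d t|).trans hK
  have hρ2 : 1 ≤ 3 * ρ ^ 2 := by nlinarith
  have hx2 : |x ^ 2 + x * x' + x' ^ 2| ≤ 3 * ρ ^ 2 := by
    have := abs_add_three (x ^ 2) (x * x') (x' ^ 2)
    simp only [abs_mul, abs_pow] at this
    nlinarith [abs_nonneg x, abs_nonneg x', mul_le_mul hx hx' (abs_nonneg x') (by linarith)]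
  have hx1 : |x + x'| ≤ 3 * ρ ^ 2 := by nlinarith [abs_add_le x x']
  have hfac : abelField a b c d t x - abelField a b c d t x' =
      -((x - x') * (a t * (x ^ 2 + x * x' + x' ^ 2) + b t * (x + x') + c t)) := by
    simp only [abelField]; ring
  rw [Real.coe_toNNReal _ (by positivity), Real.dist_eq, Real.dist_eq, hfac, abs_neg, abs_mul,
    mul_comm]
  gcongr
  calc |a t * (x ^ 2 + x * x' + x' ^ 2) + b t * (x + x') + c t|
      ≤ |a t| * |x ^ 2 + x * x' + x' ^ 2| + |b t| * |x + x'| + |c t| := by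
        rw [← abs_mul, ← abs_mul]; exact abs_add_three _ _ _
    _ ≤ (|a t| + |b t| + |c t| + |d t|) * (3 * ρ ^ 2) := by
        nlinarith [mul_le_mul_of_nonneg_left hx2 (abs_nonneg (a t)),
          mul_le_mul_of_nonneg_left hx1 (abs_nonneg (b t)),
          mul_le_mul_of_nonneg_left hρ2 (abs_nonneg (c t)), abs_nonneg (d t)]
    _ ≤ 3 * K * ρ ^ 2 := by nlinarith

lemma ContinuousOn.abelField {S : Set ℝ} {y : ℝ → ℝ} (ha : ContinuousOn a S)
    (hb : ContinuousOn b S) (hc : ContinuousOn c S) (hd : ContinuousOn d S)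
    (hy : ContinuousOn y S) : ContinuousOn (fun t => abelField a b c d t (y t)) S := by
  unfold _root_.abelField; fun_prop

lemma exists_abs_coeff_le {s m : ℝ} (ha : ContinuousOn a (Icc s m)) (hb : ContinuousOn b (Icc s m))
    (hc : ContinuousOn c (Icc s m)) (hd : ContinuousOn d (Icc s m)) :
    ∃ K, ∀ t ∈ Icc s m, |a t| + |b t| + |c t| + |d t| ≤ K := by
  obtain ⟨K, hK⟩ := isCompact_Icc.bddAbove_image (((ha.abs.add hb.abs).add hc.abs).add hd.abs)
  exact ⟨K, fun t ht => hK (mem_image_of_mem _ ht)⟩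

theorem exists_isSolutionOn_abelField_Icc {s m₁ : ℝ} (hs : s < m₁)
    (ha : ContinuousOn a (Icc s m₁)) (hb : ContinuousOn b (Icc s m₁))
    (hc : ContinuousOn c (Icc s m₁)) (hd : ContinuousOn d (Icc s m₁)) (γ : ℝ) :
    ∃ m ∈ Ioc s m₁, ∃ w : ℝ → ℝ, w s = γ ∧ IsSolutionOn (abelField a b c d) w (Icc s m) := by
  obtain ⟨K, hK⟩ := exists_abs_coeff_le ha hb hc hd
  have hK0 : 0 ≤ K :=
    (by positivity : (0 : ℝ) ≤ |a s| + |b s| + |c s| + |d s|).trans (hK s ⟨le_rfl, hs.le⟩)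
  set ρ := |γ| + 1
  have hρ : 1 ≤ ρ := le_add_of_nonneg_left (abs_nonneg γ)
  set ε := min (m₁ - s) (1 / (K * ρ ^ 3 + 1))
  have hε : 0 < ε := lt_min (sub_pos.2 hs) (by positivity)
  have hm : s + ε ∈ Ioc s m₁ :=
    ⟨lt_add_of_pos_right s hε, by linarith [min_le_left (m₁ - s) (1 / (K * ρ ^ 3 + 1))]⟩
  have hIcc : Icc s (s + ε) ⊆ Icc s m₁ := Icc_subset_Icc_right hm.2
  have hball : Metric.closedBall γ 1 ⊆ Metric.closedBall 0 ρ :=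
    Metric.closedBall_subset_closedBall' (by rw [Real.dist_0_eq_abs, add_comm])
  have hpl : IsPicardLindelof (abelField a b c d) (tmin := s) (tmax := s + ε)
      ⟨s, left_mem_Icc.2 hm.1.le⟩ γ 1 0 (K * ρ ^ 3).toNNReal (3 * K * ρ ^ 2).toNNReal := {
    lipschitzOnWith := fun t ht => (lipschitzOnWith_abelField (hK t (hIcc ht)) hρ).mono hball
    continuousOn := fun x _ => (ha.mono hIcc).abelField (hb.mono hIcc) (hc.mono hIcc)
      (hd.mono hIcc) continuousOn_const
    norm_le := fun t ht x hx => by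
      rw [Real.norm_eq_abs, Real.coe_toNNReal _ (by positivity)]
      exact abs_abelField_le (hK t (hIcc ht)) hρ (mem_closedBall_zero_iff.1 (hball hx))
    mul_max_le := by
      rw [Real.coe_toNNReal _ (by positivity), sub_self, add_sub_cancel_left, max_eq_left hε.le,
        NNReal.coe_one, NNReal.coe_zero, sub_zero]
      calc K * ρ ^ 3 * ε ≤ K * ρ ^ 3 * (1 / (K * ρ ^ 3 + 1)) :=
            mul_le_mul_of_nonneg_left (min_le_right _ _) (by positivity)
        _ ≤ 1 := by rw [mul_one_div, div_le_one (by positivity)]; linarith }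
  obtain ⟨w, hw0, hw⟩ := hpl.exists_eq_forall_mem_Icc_hasDerivWithinAt₀
  exact ⟨s + ε, hm, w, hw0, hw⟩

theorem exists_abs_le_of_isSolutionOn_abelField {y : ℝ → ℝ} {t₀ t₁ : ℝ}
    (ha : ContinuousOn a (Icc t₀ t₁)) (hb : ContinuousOn b (Icc t₀ t₁))
    (hc : ContinuousOn c (Icc t₀ t₁)) (hd : ContinuousOn d (Icc t₀ t₁))
    (hapos : ∀ᵐ t ∂volume.restrict (Ico t₀ t₁), 0 < a t)
    (hint : IntegrableOn (fun t => b t ^ 2 / a t) (Icc t₀ t₁))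
    (hy : IsSolutionOn (abelField a b c d) y (Ico t₀ t₁)) :
    ∃ R, ∀ t ∈ Ico t₀ t₁, |y t| ≤ R :=
  exists_abs_le_of_two_mul_deriv_le hy
    ((ha.mono Ico_subset_Icc_self).abelField (hb.mono Ico_subset_Icc_self)
      (hc.mono Ico_subset_Icc_self) (hd.mono Ico_subset_Icc_self)
      fun t ht => (hy t ht).continuousWithinAt)
    (hint.add ((continuousOn_const.mul hc.abs).add hd.abs).integrableOn_Icc)
    (hapos.mono fun t ht => two_mul_mul_abelField_le ht (y t))

theorem IsSolutionOn.exists_extension_abelField {y : ℝ → ℝ} {t₀ r m₁ : ℝ} (hr : t₀ < r)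
    (hrm : r < m₁) (ha : ContinuousOn a (Icc t₀ m₁)) (hb : ContinuousOn b (Icc t₀ m₁))
    (hc : ContinuousOn c (Icc t₀ m₁)) (hd : ContinuousOn d (Icc t₀ m₁))
    (hapos : ∀ᵐ t ∂volume.restrict (Ico t₀ r), 0 < a t)
    (hint : IntegrableOn (fun t => b t ^ 2 / a t) (Icc t₀ r))
    (hy : IsSolutionOn (abelField a b c d) y (Ico t₀ r)) :
    ∃ m ∈ Ioc r m₁, ∃ z : ℝ → ℝ,
      IsSolutionOn (abelField a b c d) z (Ico t₀ m) ∧ EqOn z y (Ico t₀ r) := by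
  have hsub : Icc t₀ r ⊆ Icc t₀ m₁ := Icc_subset_Icc_right hrm.le
  obtain ⟨R, hR⟩ := exists_abs_le_of_isSolutionOn_abelField (ha.mono hsub) (hb.mono hsub)
    (hc.mono hsub) (hd.mono hsub) hapos hint hy
  obtain ⟨K, hK⟩ := exists_abs_coeff_le (ha.mono hsub) (hb.mono hsub) (hc.mono hsub) (hd.mono hsub)
  obtain ⟨L, hL⟩ := exists_tendsto_nhdsLT_of_abs_deriv_le hr hy fun t ht =>
    abs_abelField_le (hK t (Ico_subset_Icc_self ht)) (le_max_right R 1)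
      ((hR t ht).trans (le_max_left R 1))
  have hsub' : Icc r m₁ ⊆ Icc t₀ m₁ := Icc_subset_Icc_left hr.le
  obtain ⟨m, hm, w, hw0, hw⟩ := exists_isSolutionOn_abelField_Icc hrm (ha.mono hsub')
    (hb.mono hsub') (hc.mono hsub') (hd.mono hsub') L
  have hlim : ∀ g : ℝ → ℝ, ContinuousOn g (Icc t₀ m₁) → Tendsto g (𝓝[<] r) (𝓝 (g r)) :=
    fun g hg => (hg.continuousWithinAt ⟨hr.le, hrm.le⟩).mono_of_mem_nhdsWithin
      (mem_of_superset (Ioo_mem_nhdsLT hr) (Ioo_subset_Icc_self.trans hsub))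
  refine ⟨m, hm, _, hy.ite hr (hw0 ▸ hL) ?_ hw, fun t ht => if_pos ht.2⟩
  rw [hw0]
  exact ((((hlim a ha).mul (hL.pow 3)).add ((hlim b hb).mul (hL.pow 2))).add
    ((hlim c hc).mul hL)).add (hlim d hd) |>.neg

end Abel

theorem eq_of_noncontinuable {t₀ : ℝ} {τ₀ t₁ : EReal} {a b c d y : ℝ → ℝ}
    (ha : ContinuousOn a (eIco t₀ τ₀)) (hb : ContinuousOn b (eIco t₀ τ₀))
    (hc : ContinuousOn c (eIco t₀ τ₀)) (hd : ContinuousOn d (eIco t₀ τ₀))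
    (hapos : ∀ᵐ t ∂(volume.restrict (eIco t₀ τ₀)), 0 < a t)
    (hint : ∀ t : ℝ, t₀ < t → (t : EReal) < τ₀ → IntegrableOn (fun s => b s ^ 2 / a s) (Icc t₀ t))
    (h₀₁ : (t₀ : EReal) < t₁) (h₁ : t₁ ≤ τ₀) (hy : IsAbelSolOn a b c d y (eIco t₀ t₁))
    (hnc : Noncontinuable a b c d t₀ τ₀ t₁ y) : t₁ = τ₀ := by
  refine h₁.eq_or_lt.resolve_right fun h₁τ => hnc ?_
  lift t₁ to ℝ using ⟨(h₁τ.trans_le le_top).ne, h₀₁.ne_bot⟩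
  obtain ⟨m₁, h₁m₁, hm₁τ⟩ := EReal.exists_between_coe_real h₁τ
  have hsub := Icc_subset_eIco (t₀ := t₀) hm₁τ
  rw [eIco_coe] at hy
  obtain ⟨m, hm, z, hz, hzy⟩ := IsSolutionOn.exists_extension_abelField
    (EReal.coe_lt_coe_iff.1 h₀₁) (EReal.coe_lt_coe_iff.1 h₁m₁) (ha.mono hsub) (hb.mono hsub)
    (hc.mono hsub) (hd.mono hsub)
    (ae_restrict_of_ae_restrict_of_subset ((Ico_subset_Icc_self.trans
      (Icc_subset_Icc_right (EReal.coe_lt_coe_iff.1 h₁m₁).le)).trans hsub) hapos)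
    (hint t₁ (EReal.coe_lt_coe_iff.1 h₀₁) h₁τ) hy
  exact ⟨m, z, EReal.coe_lt_coe_iff.2 hm.1, (EReal.coe_le_coe_iff.2 hm.2).trans hm₁τ.le,
    by rwa [eIco_coe], by rwa [eIco_coe]⟩

/-- Theorem 2.1: if `a > 0` a.e. on `[t₀, τ₀)` and `b²/a` is locally integrable there, then
every noncontinuable solution of the Abel equation (1.1) on `[t₀, t₁) ⊆ [t₀, τ₀)` satisfies
`t₁ = τ₀`; in particular every initial value problem has a solution on all of `[t₀, τ₀)`. -/
theorem stmt_2 (t₀ : ℝ) (τ₀ : EReal) (hτ : (t₀ : EReal) < τ₀)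
    (a b c d : ℝ → ℝ)
    (ha : ContinuousOn a (eIco t₀ τ₀)) (hb : ContinuousOn b (eIco t₀ τ₀))
    (hc : ContinuousOn c (eIco t₀ τ₀)) (hd : ContinuousOn d (eIco t₀ τ₀))
    (hapos : ∀ᵐ t ∂(volume.restrict (eIco t₀ τ₀)), 0 < a t)
    (hint : ∀ t : ℝ, t₀ < t → (t : EReal) < τ₀ →
      IntegrableOn (fun s => b s ^ 2 / a s) (Icc t₀ t)) :
    (∀ (t₁ : EReal) (y : ℝ → ℝ), (t₀ : EReal) < t₁ → t₁ ≤ τ₀ →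
        IsAbelSolOn a b c d y (eIco t₀ t₁) →
        Noncontinuable a b c d t₀ τ₀ t₁ y → t₁ = τ₀) ∧
      ∀ γ : ℝ, ∃ y : ℝ → ℝ, y t₀ = γ ∧ IsAbelSolOn a b c d y (eIco t₀ τ₀) := by
  refine ⟨fun _ _ => eq_of_noncontinuable ha hb hc hd hapos hint, fun γ => ?_⟩
  obtain ⟨m₁, h₀m₁, hm₁τ⟩ := EReal.exists_between_coe_real hτ
  have hsub := Icc_subset_eIco (t₀ := t₀) hm₁τ
  obtain ⟨m, hm, w, hw₀, hw⟩ := exists_isSolutionOn_abelField_Icc (EReal.coe_lt_coe_iff.1 h₀m₁)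
    (ha.mono hsub) (hb.mono hsub) (hc.mono hsub) (hd.mono hsub) γ
  have hw' : IsSolutionOn (abelField a b c d) w (eIco t₀ m) := by
    rw [eIco_coe]; exact hw.mono Ico_subset_Icc_self
  have h₀m : (t₀ : EReal) < m := EReal.coe_lt_coe_iff.2 hm.1
  obtain ⟨t₂, z, hm₂, h₂, hz, hzw, hnc⟩ :=
    hw'.exists_maximal_extension ((EReal.coe_le_coe_iff.2 hm.2).trans hm₁τ.le)
  refine ⟨z, (hzw ⟨le_rfl, h₀m⟩).trans hw₀, ?_⟩
  rwa [← eq_of_noncontinuable ha hb hc hd hapos hint (h₀m.trans_le hm₂) h₂ hz hnc]
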